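/- arXiv:1607.07202 — 4 statements merged into one kernel-verified Lean document; each statement's English description precedes it below -/
import Mathlib

section
/- Let (D, ⟨·,·⟩) be a finite-dimensional real inner product space with a compatible complex structure J. If A : D → D is an invertible, skew-symmetric linear operator anti-commuting with J, then dim D ≡ 0 (mod 4). -/
/-
`J` makes `D` a complex vector space, with `I` acting as `J`. Since `A` anticommutes with `J` and
`J` is orthogonal, the symplectic form `ω x y = ⟪A x, y⟫` satisfies `ω (J x) y = ω x (J y)`, so
`ω x y - ω x (J y) I` is a complex bilinear form. It is alternating and nondegenerate, hence the
complex dimension of `D` is even (the determinant of a skew matrix of odd size vanishes), and the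
real dimension is twice the complex one.
-/

open scoped RealInnerProductSpace
open Module Complex

theorem LinearMap.BilinForm.even_finrank_of_isAlt {K V : Type*} [Field K] [NeZero (2 : K)]
    [AddCommGroup V] [Module K V] [FiniteDimensional K V]
    {B : LinearMap.BilinForm K V} (hB : B.IsAlt) (hnd : B.Nondegenerate) :
    Even (finrank K V) := by
  let b := finBasis K V
  set M := BilinForm.toMatrix b B
  have hdet : M.det ≠ 0 := (nondegenerate_iff_det_ne_zero b).mp hnd
  have hskew : M.transpose = -M := by
    ext i j
    exact (LinearMap.IsAlt.neg hB _ _).symm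
  by_contra hodd
  have hdet_neg : M.det = -M.det := by
    simpa [Matrix.det_neg, Nat.not_even_iff_odd.mp hodd] using congrArg Matrix.det hskew
  have : 2 * M.det = 0 := by linear_combination hdet_neg
  exact hdet ((mul_eq_zero.mp this).resolve_left two_ne_zero)

section ComplexStructure

variable {V : Type*} [AddCommGroup V] [Module ℝ V] (J : Module.End ℝ V) (hJ : J * J = -1)

abbrev Module.End.complexModule : Module ℂ V :=
  Module.compHom V (Complex.lift ⟨J, hJ⟩).toRingHom

theorem Module.End.complexModule_I_smul (x : V) :
    letI := J.complexModule hJ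
    I • x = J x := by
  show Complex.lift ⟨J, hJ⟩ I x = J x
  simp

theorem Module.End.isScalarTower_complexModule :
    letI := J.complexModule hJ
    IsScalarTower ℝ ℂ V := by
  let := J.complexModule hJ
  refine ⟨fun r z x => ?_⟩
  show Complex.lift ⟨J, hJ⟩ (r • z) x = r • Complex.lift ⟨J, hJ⟩ z x
  rw [map_smul]
  rfl

end ComplexStructure

section ComplexBilinForm

variable {V : Type*} [AddCommGroup V] [Module ℂ V] [Module ℝ V] [IsScalarTower ℝ ℂ V]

theorem Complex.smul_eq_re_smul_add_im_smul_I_smul (z : ℂ) (x : V) :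
    z • x = z.re • x + z.im • (I • x) := by
  conv_lhs => rw [← z.re_add_im]
  rw [add_smul, mul_smul, ← algebraMap_smul ℂ z.re, ← algebraMap_smul ℂ z.im]
  rfl

namespace LinearMap.BilinForm

variable (ω : LinearMap.BilinForm ℝ V)

theorem ofReal_apply_smul_sub_mul_I (z : ℂ) (x y : V) :
    (ω x (z • y) : ℂ) - (ω x (z • I • y) : ℂ) * I = z * ((ω x y : ℂ) - (ω x (I • y) : ℂ) * I) := by
  have hII : I • I • y = -y := by rw [smul_smul, I_mul_I, neg_one_smul]
  rw [smul_eq_re_smul_add_im_smul_I_smul z y,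
    smul_eq_re_smul_add_im_smul_I_smul z (I • y)]
  simp only [map_add, map_smul, hII, map_neg, smul_eq_mul]
  conv_rhs => rw [← z.re_add_im]
  push_cast
  linear_combination ((z.im : ℂ) * (ω x (I • y) : ℂ)) * I_sq

variable {ω} (hω : ∀ x y, ω (I • x) y = ω x (I • y))
include hω

theorem apply_smul_left_eq_apply_smul_right (z : ℂ) (x y : V) : ω (z • x) y = ω x (z • y) := by
  rw [smul_eq_re_smul_add_im_smul_I_smul z x, smul_eq_re_smul_add_im_smul_I_smul z y]
  simp only [map_add, map_smul, LinearMap.add_apply, LinearMap.smul_apply, hω]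

noncomputable def toComplex : LinearMap.BilinForm ℂ V :=
  LinearMap.mk₂ ℂ (fun x y => (ω x y : ℂ) - (ω x (I • y) : ℂ) * I)
    (fun x₁ x₂ y => by simp only [map_add, LinearMap.add_apply]; push_cast; ring)
    (fun z x y => by
      simp only [apply_smul_left_eq_apply_smul_right hω, ofReal_apply_smul_sub_mul_I, smul_eq_mul])
    (fun x y₁ y₂ => by simp only [map_add, smul_add]; push_cast; ring)
    (fun z x y => by rw [smul_comm I z y, ofReal_apply_smul_sub_mul_I, smul_eq_mul])

theorem toComplex_apply (x y : V) :
    toComplex hω x y = (ω x y : ℂ) - (ω x (I • y) : ℂ) * I :=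
  rfl

theorem isAlt_toComplex (halt : ω.IsAlt) : (toComplex hω).IsAlt := by
  intro x
  have hIx : ω x (I • x) = 0 := by
    have := LinearMap.IsAlt.neg halt x (I • x)
    rw [hω] at this
    linarith
  simp [toComplex_apply, halt x, hIx]

theorem nondegenerate_toComplex (halt : ω.IsAlt) (hsep : ω.SeparatingLeft) :
    (toComplex hω).Nondegenerate := by
  refine ((isAlt_toComplex hω halt).isRefl.nondegenerate_iff_separatingLeft).mpr
    fun x hx => hsep x fun y => ?_
  simpa [toComplex_apply] using congrArg Complex.re (hx y)

end LinearMap.BilinForm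

end ComplexBilinForm

theorem stmt2 {D : Type*} [NormedAddCommGroup D] [InnerProductSpace ℝ D]
    [FiniteDimensional ℝ D] (J A : D →ₗ[ℝ] D)
    (hJ2 : ∀ X, J (J X) = -X)
    (hJg : ∀ X Y : D, ⟪J X, J Y⟫ = ⟪X, Y⟫)
    (hAbij : Function.Bijective A)
    (hskew : ∀ X Y : D, ⟪A X, Y⟫ = -⟪X, A Y⟫)
    (hAJ : ∀ X, A (J X) = -J (A X)) :
    Module.finrank ℝ D % 4 = 0 := by
  have hJJ : J * J = -1 := LinearMap.ext hJ2
  let := Module.End.complexModule J hJJ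
  have := Module.End.isScalarTower_complexModule J hJJ
  have : FiniteDimensional ℂ D := .right ℝ ℂ D
  let ω : LinearMap.BilinForm ℝ D := (innerₗ D).comp A
  have hω : ∀ x y, ω (I • x) y = ω x (I • y) := by
    intro x y
    have hJ_isom := hJg (A x) (J y)
    simp only [ω, LinearMap.comp_apply, innerₗ_apply_apply, Module.End.complexModule_I_smul, hAJ,
      inner_neg_left]
    rw [hJ2, inner_neg_right] at hJ_isom
    linarith
  have halt : ω.IsAlt := fun x => by
    simp only [ω, LinearMap.comp_apply, innerₗ_apply_apply]
    linarith [hskew x x, real_inner_comm x (A x)]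
  have hsep : ω.SeparatingLeft := fun x hx =>
    hAbij.injective <| by simpa [ω] using hx (A x)
  obtain ⟨k, hk⟩ := LinearMap.BilinForm.even_finrank_of_isAlt
    (LinearMap.BilinForm.isAlt_toComplex hω halt)
    (LinearMap.BilinForm.nondegenerate_toComplex hω halt hsep)
  rw [← finrank_mul_finrank ℝ ℂ D, Complex.finrank_real_complex, hk]
  omega
end

section
/- Let (D, ⟨·,·⟩) be a real inner product space with compatible complex structure J, and A : D → D an invertible skew-symmetric operator anti-commuting with J. If X is an eigenvector of A², then X, JX, AX, JAX are pairwise orthogonal nonzero eigenvectors of A²; in particular dim D ≥ 4. -/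
open scoped RealInnerProductSpace

theorem stmt3 {D : Type*} [NormedAddCommGroup D] [InnerProductSpace ℝ D]
    [FiniteDimensional ℝ D] (J A : D →ₗ[ℝ] D)
    (hJ2 : ∀ X, J (J X) = -X)
    (hJg : ∀ X Y : D, ⟪J X, J Y⟫ = ⟪X, Y⟫)
    (hAbij : Function.Bijective A)
    (hskew : ∀ X Y : D, ⟪A X, Y⟫ = -⟪X, A Y⟫)
    (hAJ : ∀ X, A (J X) = -J (A X))
    (X : D) (hX : X ≠ 0) (μ : ℝ) (heig : A (A X) = μ • X) :
    (J X ≠ 0 ∧ A X ≠ 0 ∧ J (A X) ≠ 0) ∧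
    (⟪X, J X⟫ = 0 ∧ ⟪X, A X⟫ = 0 ∧ ⟪X, J (A X)⟫ = 0 ∧
      ⟪J X, A X⟫ = 0 ∧ ⟪J X, J (A X)⟫ = 0 ∧ ⟪A X, J (A X)⟫ = 0) ∧
    (A (A (J X)) = μ • J X ∧ A (A (A X)) = μ • A X ∧
      A (A (J (A X))) = μ • J (A X)) ∧
    4 ≤ Module.finrank ℝ D := by
  have hJne : ∀ Y : D, Y ≠ 0 → J Y ≠ 0 := by
    intro Y hY h
    apply hY
    have := hJ2 Y
    rw [h] at this
    simpa using this.symm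
  have hAne : ∀ Y : D, Y ≠ 0 → A Y ≠ 0 := by
    intro Y hY h
    exact hY (hAbij.injective (by simpa using h))
  have hAX : A X ≠ 0 := hAne X hX
  have hJX : J X ≠ 0 := hJne X hX
  have hJAX : J (A X) ≠ 0 := hJne _ hAX
  -- ⟪Y, J Y⟫ = 0 for all Y
  have hYJY : ∀ Y : D, ⟪Y, J Y⟫ = 0 := by
    intro Y
    have h1 := hJg Y (J Y)
    rw [hJ2] at h1
    have h2 : ⟪J Y, Y⟫ = ⟪Y, J Y⟫ := real_inner_comm _ _
    have h3 : ⟪J Y, -Y⟫ = -⟪J Y, Y⟫ := by simp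
    rw [h3, h2] at h1
    linarith
  -- ⟪Y, A Y⟫ = 0
  have hYAY : ∀ Y : D, ⟪Y, A Y⟫ = 0 := by
    intro Y
    have h1 := hskew Y Y
    have h2 := real_inner_comm Y (A Y)
    linarith
  have hXJAX : ⟪X, J (A X)⟫ = 0 := by
    -- ⟪X, JAX⟫ = -⟪JX, AX⟫ and ⟪JAX, X⟫ = ⟪JX, AX⟫
    have h1 : ⟪J X, J (J (A X))⟫ = ⟪X, J (A X)⟫ := hJg _ _
    rw [hJ2] at h1
    have h1' : ⟪X, J (A X)⟫ = -⟪J X, A X⟫ := by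
      rw [← h1]; simp
    have h2 := hskew (J X) X
    rw [hAJ] at h2
    have h2' : ⟪J (A X), X⟫ = ⟪J X, A X⟫ := by
      have : ⟪-J (A X), X⟫ = -⟪J (A X), X⟫ := by simp
      rw [this] at h2; linarith
    have h3 : ⟪X, J (A X)⟫ = ⟪J (A X), X⟫ := real_inner_comm _ _
    linarith
  have hJXAX : ⟪J X, A X⟫ = 0 := by
    have h1 : ⟪J X, J (J (A X))⟫ = ⟪X, J (A X)⟫ := hJg _ _
    rw [hJ2] at h1
    have : ⟪J X, -A X⟫ = -⟪J X, A X⟫ := by simp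
    rw [this, hXJAX] at h1
    linarith
  have hJXJAX : ⟪J X, J (A X)⟫ = 0 := by rw [hJg]; exact hYAY X
  -- eigenvalue equations
  have e1 : A (A (J X)) = μ • J X := by
    rw [hAJ, map_neg, hAJ, neg_neg, heig, map_smul]
  have e2 : A (A (A X)) = μ • A X := by
    rw [show A (A (A X)) = A (A (A X)) from rfl]
    calc A (A (A X)) = A (μ • X) := by rw [heig]
    _ = μ • A X := by rw [map_smul]
  have e3 : A (A (J (A X))) = μ • J (A X) := by
    rw [hAJ, map_neg, hAJ, neg_neg, e2, map_smul]
  refine ⟨⟨hJX, hAX, hJAX⟩, ⟨hYJY X, hYAY X, hXJAX, hJXAX, hJXJAX, hYJY (A X)⟩,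
    ⟨e1, e2, e3⟩, ?_⟩
  -- linear independence
  have c1 : ⟪J X, X⟫ = 0 := by rw [real_inner_comm]; exact hYJY X
  have c2 : ⟪A X, X⟫ = 0 := by rw [real_inner_comm]; exact hYAY X
  have c3 : ⟪J (A X), X⟫ = 0 := by rw [real_inner_comm]; exact hXJAX
  have c4 : ⟪A X, J X⟫ = 0 := by rw [real_inner_comm]; exact hJXAX
  have c5 : ⟪J (A X), J X⟫ = 0 := by rw [real_inner_comm]; exact hJXJAX
  have c6 : ⟪J (A X), A X⟫ = 0 := by rw [real_inner_comm]; exact hYJY (A X)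
  have h0 := hYJY X
  have h1 := hYAY X
  have h2 := hYJY (A X)
  have hli : LinearIndependent ℝ ![X, J X, A X, J (A X)] := by
    apply linearIndependent_of_ne_zero_of_inner_eq_zero
    · intro i
      fin_cases i
      exacts [hX, hJX, hAX, hJAX]
    · intro i j hij
      fin_cases i <;> fin_cases j <;>
        first | exact absurd rfl hij | assumption
  have := hli.fintype_card_le_finrank
  simpa using this
end

section
/- Let V be a (2n+1)-dimensional real inner product space carrying an almost contact metric structure (φ, ξ, η, g), and let D = ker η. Suppose B : D → D is a skew-symmetric automorphism with Bφ + φB = 0 on D. Then n is even, i.e. dim V ≡ 1 (mod 4). -/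
/-!
The restriction of `φ` to `D` is a complex structure, making `D` an `n`-dimensional complex
vector space. Because `B` anticommutes with `φ`, the form
`ω(X, Y) = g(BX, Y) - i g(BX, φY)` is complex bilinear on `D`; it is alternating because `B` is
skew, and nondegenerate because `Re ω(X, BX) = |BX|²` and `B` is injective. The Gram matrix `M`
of `ω` then satisfies `det M = det Mᵀ = (-1)ⁿ det M ≠ 0`, so `n` is even.
-/

open scoped RealInnerProductSpace Matrix
open Module Complex

theorem Matrix.det_eq_zero_of_transpose_eq_neg {K ι : Type*} [Field K] [NeZero (2 : K)]
    [Fintype ι] [DecidableEq ι] {M : Matrix ι ι K} (hM : Mᵀ = -M)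
    (hodd : Odd (Fintype.card ι)) : M.det = 0 := by
  have h := M.det_transpose
  rw [hM, det_neg, hodd.neg_one_pow, neg_one_mul, neg_eq_iff_add_eq_zero, ← two_mul] at h
  exact (mul_eq_zero.mp h).resolve_left two_ne_zero

theorem LinearMap.BilinForm.IsAlt.even_finrank_of_nondegenerate {K V : Type*} [Field K]
    [NeZero (2 : K)] [AddCommGroup V] [Module K V] [FiniteDimensional K V]
    {ω : LinearMap.BilinForm K V} (hω : ω.IsAlt) (hnd : ω.Nondegenerate) : Even (finrank K V) := by
  by_contra hodd
  let b := Module.finBasis K V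
  have hskew : (toMatrix b ω)ᵀ = -toMatrix b ω := by
    ext i j
    simp [toMatrix_apply, hω.neg_eq]
  exact (nondegenerate_iff_det_ne_zero b).mp hnd <|
    Matrix.det_eq_zero_of_transpose_eq_neg hskew (by simpa using Nat.not_even_iff_odd.mp hodd)

theorem LinearMap.exists_complexModule {E : Type*} [AddCommGroup E] [Module ℝ E]
    (J : E →ₗ[ℝ] E) (hJ : ∀ x, J (J x) = -x) :
    ∃ (_ : Module ℂ E) (_ : IsScalarTower ℝ ℂ E), ∀ x : E, I • x = J x := by
  let j : ℂ →ₐ[ℝ] Module.End ℝ E := lift ⟨J, LinearMap.ext hJ⟩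
  let _ : Module ℂ E := Module.compHom E j.toRingHom
  refine ⟨‹_›, ⟨fun r z x => ?_⟩, fun x => ?_⟩
  · show j (r • z) x = r • j z x
    rw [map_smul]
    rfl
  · show j I x = J x
    simp [j]

theorem Complex.I_smul_I_smul {E : Type*} [AddCommGroup E] [Module ℂ E] (x : E) :
    I • I • x = -x := by
  rw [smul_smul, I_mul_I, neg_one_smul]

theorem Complex.smul_eq_re_smul_add_im_smul {E : Type*} [AddCommGroup E] [Module ℝ E]
    [Module ℂ E] [IsScalarTower ℝ ℂ E] (z : ℂ) (x : E) : z • x = z.re • x + z.im • (I • x) := by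
  conv_lhs => rw [← re_add_im z]
  rw [add_smul, mul_smul, ← coe_algebraMap, algebraMap_smul, algebraMap_smul]

section AntilinearForm

variable {E : Type*} [NormedAddCommGroup E] [InnerProductSpace ℝ E] [Module ℂ E]
  [IsScalarTower ℝ ℂ E]

noncomputable def antilinearBilinForm (B : E →ₗ[ℝ] E) (hI : ∀ x y : E, ⟪I • x, y⟫ = -⟪x, I • y⟫)
    (hBI : ∀ x, B (I • x) = -(I • B x)) : LinearMap.BilinForm ℂ E :=
  LinearMap.mk₂ ℂ (fun x y => (⟪B x, y⟫ : ℂ) - I * ⟪B x, I • y⟫)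
    (fun x x' y => by simp only [map_add, inner_add_left]; push_cast; ring)
    (fun z x y => by
      simp only [smul_eq_re_smul_add_im_smul z x, map_add, map_smul, hBI, smul_neg,
        inner_add_left, inner_neg_left, real_inner_smul_left, hI, I_smul_I_smul, inner_neg_right]
      exact Complex.ext (by simp) (by simp; ring))
    (fun x y y' => by simp only [smul_add, inner_add_right]; push_cast; ring)
    (fun z x y => by
      simp only [smul_comm I z y]
      simp only [smul_eq_re_smul_add_im_smul z, I_smul_I_smul, inner_add_right, inner_neg_right,
        real_inner_smul_right]
      exact Complex.ext (by simp) (by simp; ring))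

variable {B : E →ₗ[ℝ] E} {hI : ∀ x y : E, ⟪I • x, y⟫ = -⟪x, I • y⟫}
  {hBI : ∀ x, B (I • x) = -(I • B x)}

theorem antilinearBilinForm_apply (x y : E) :
    antilinearBilinForm B hI hBI x y = (⟪B x, y⟫ : ℂ) - I * ⟪B x, I • y⟫ :=
  rfl

theorem antilinearBilinForm_isAlt (hB : ∀ x y, ⟪B x, y⟫ = -⟪x, B y⟫) :
    (antilinearBilinForm B hI hBI).IsAlt := by
  intro x
  have hre : ⟪B x, x⟫ = 0 := by
    have := hB x x
    rw [real_inner_comm (B x) x] at this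
    linarith
  have him : ⟪B x, I • x⟫ = 0 := by
    have := hB x (I • x)
    rw [hBI, inner_neg_right, neg_neg, real_inner_comm (I • B x) x, hI] at this
    linarith
  simp [antilinearBilinForm_apply, hre, him]

theorem antilinearBilinForm_nondegenerate (hB : ∀ x y, ⟪B x, y⟫ = -⟪x, B y⟫)
    (hBinj : Function.Injective B) : (antilinearBilinForm B hI hBI).Nondegenerate := by
  refine (antilinearBilinForm_isAlt hB).isRefl.nondegenerate_iff_separatingLeft.mpr
    fun x hx => hBinj ?_
  have h := congrArg re (hx (B x))
  simp only [antilinearBilinForm_apply, sub_re, ofReal_re, mul_re, I_re, I_im, ofReal_im] at h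
  simpa using h

end AntilinearForm

theorem even_finrank_of_skew_antilinear_injective {E : Type*} [NormedAddCommGroup E]
    [InnerProductSpace ℝ E] [Module ℂ E] [IsScalarTower ℝ ℂ E] [FiniteDimensional ℂ E]
    (hI : ∀ x y : E, ⟪I • x, y⟫ = -⟪x, I • y⟫) (B : E →ₗ[ℝ] E)
    (hB : ∀ x y, ⟪B x, y⟫ = -⟪x, B y⟫) (hBI : ∀ x, B (I • x) = -(I • B x))
    (hBinj : Function.Injective B) : Even (finrank ℂ E) :=
  (antilinearBilinForm_isAlt (hI := hI) (hBI := hBI) hB).even_finrank_of_nondegenerate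
    (antilinearBilinForm_nondegenerate hB hBinj)

theorem four_dvd_finrank_of_skew_anticommuting {E : Type*} [NormedAddCommGroup E]
    [InnerProductSpace ℝ E] [FiniteDimensional ℝ E] (J B : E →ₗ[ℝ] E) (hJJ : ∀ x, J (J x) = -x)
    (hJ : ∀ x y, ⟪J x, y⟫ = -⟪x, J y⟫) (hB : ∀ x y, ⟪B x, y⟫ = -⟪x, B y⟫)
    (hBJ : ∀ x, B (J x) = -J (B x)) (hBinj : Function.Injective B) : 4 ∣ finrank ℝ E := by
  obtain ⟨_, _, hIJ⟩ := J.exists_complexModule hJJ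
  have : FiniteDimensional ℂ E := .right ℝ ℂ E
  have hfinrank := finrank_mul_finrank ℝ ℂ E
  rw [Complex.finrank_real_complex] at hfinrank
  obtain ⟨m, hm⟩ := even_finrank_of_skew_antilinear_injective (by simpa only [hIJ] using hJ) B hB
    (by simpa only [hIJ] using hBJ) hBinj
  omega

namespace AlmostContact

section

variable {V : Type*} [AddCommGroup V] [Module ℝ V] {φ : V →ₗ[ℝ] V} {ξ : V} {η : V →ₗ[ℝ] ℝ}

theorem eta_phi_smul_reeb (hφ2 : ∀ X, φ (φ X) = -X + η X • ξ) (X : V) :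
    η (φ X) • ξ = η X • φ ξ := by
  have h := hφ2 (φ X)
  rw [hφ2 X, map_add, map_neg, map_smul] at h
  exact (add_left_cancel h).symm

theorem phi_reeb_eq_zero (hφ2 : ∀ X, φ (φ X) = -X + η X • ξ) (hηξ : η ξ = 1) : φ ξ = 0 := by
  have hφξ : η (φ ξ) • ξ = φ ξ := by simpa [hηξ] using eta_phi_smul_reeb hφ2 ξ
  have hφφξ : η (φ ξ) • φ ξ = 0 := by
    rw [← map_smul, hφξ, hφ2, hηξ, one_smul, neg_add_cancel]
  rcases smul_eq_zero.mp hφφξ with h | h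
  · rw [← hφξ, h, zero_smul]
  · exact h

theorem eta_phi (hφ2 : ∀ X, φ (φ X) = -X + η X • ξ) (hηξ : η ξ = 1) (X : V) : η (φ X) = 0 := by
  have hξ : ξ ≠ 0 := fun h => by simp [h] at hηξ
  have h := eta_phi_smul_reeb hφ2 X
  rw [phi_reeb_eq_zero hφ2 hηξ, smul_zero] at h
  exact (smul_eq_zero.mp h).resolve_right hξ

end

theorem inner_phi_left {V : Type*} [NormedAddCommGroup V] [InnerProductSpace ℝ V]
    {φ : V →ₗ[ℝ] V} {ξ : V} {η : V →ₗ[ℝ] ℝ} (hφ2 : ∀ X, φ (φ X) = -X + η X • ξ) (hηξ : η ξ = 1)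
    (hgφ : ∀ X Y : V, ⟪φ X, φ Y⟫ = ⟪X, Y⟫ - η X * η Y) (X : V) {Y : V} (hY : η Y = 0) :
    ⟪φ X, Y⟫ = -⟪X, φ Y⟫ := by
  have h := hgφ X (φ Y)
  rw [hφ2, hY, zero_smul, add_zero, inner_neg_right, eta_phi hφ2 hηξ, mul_zero, sub_zero] at h
  linarith

end AlmostContact

theorem stmt11_general {V : Type*} [NormedAddCommGroup V] [InnerProductSpace ℝ V]
    [FiniteDimensional ℝ V] (n : ℕ)
    (hdim : Module.finrank ℝ V = 2 * n + 1)
    (φ : V →ₗ[ℝ] V) (ξ : V) (η : V →ₗ[ℝ] ℝ)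
    (hφ2 : ∀ X, φ (φ X) = -X + η X • ξ)
    (hηξ : η ξ = 1)
    (hgφ : ∀ X Y : V, ⟪φ X, φ Y⟫ = ⟪X, Y⟫ - η X * η Y)
    (B : V →ₗ[ℝ] V)
    (hBD : ∀ x ∈ LinearMap.ker η, B x ∈ LinearMap.ker η)
    (hBskew : ∀ x ∈ LinearMap.ker η, ∀ y ∈ LinearMap.ker η, ⟪B x, y⟫ = -⟪x, B y⟫)
    (hBφ : ∀ x ∈ LinearMap.ker η, B (φ x) = -φ (B x))
    (hBinj : ∀ x ∈ LinearMap.ker η, B x = 0 → x = 0) :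
    Even n := by
  have hφD : ∀ x ∈ LinearMap.ker η, φ x ∈ LinearMap.ker η :=
    fun x _ => AlmostContact.eta_phi hφ2 hηξ x
  have hker : finrank ℝ (LinearMap.ker η) = 2 * n := by
    have h := Module.Dual.finrank_ker_add_one_of_ne_zero (f := η)
      (fun h => by simp [h] at hηξ)
    omega
  have h4 := four_dvd_finrank_of_skew_anticommuting (φ.restrict hφD) (B.restrict hBD)
    (fun x => Subtype.ext <| by simp [hφ2])
    (fun x y => AlmostContact.inner_phi_left hφ2 hηξ hgφ x y.2) (fun x y => hBskew x x.2 y y.2)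
    (fun x => Subtype.ext <| hBφ x x.2)
    ((injective_iff_map_eq_zero _).mpr fun x hx => Subtype.ext <| hBinj x x.2 congr($hx.1))
  rw [hker] at h4
  exact Nat.even_iff.mpr (by omega)

theorem stmt11 {V : Type*} [NormedAddCommGroup V] [InnerProductSpace ℝ V]
    [FiniteDimensional ℝ V] (n : ℕ)
    (hdim : Module.finrank ℝ V = 2 * n + 1)
    (φ : V →ₗ[ℝ] V) (ξ : V) (η : V →ₗ[ℝ] ℝ)
    (hφ2 : ∀ X, φ (φ X) = -X + η X • ξ)
    (hηξ : η ξ = 1)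
    (hgφ : ∀ X Y : V, ⟪φ X, φ Y⟫ = ⟪X, Y⟫ - η X * η Y)
    (B : V →ₗ[ℝ] V)
    (hBD : ∀ x ∈ LinearMap.ker η, B x ∈ LinearMap.ker η)
    (hBskew : ∀ x ∈ LinearMap.ker η, ∀ y ∈ LinearMap.ker η, ⟪B x, y⟫ = -⟪x, B y⟫)
    (hBφ : ∀ x ∈ LinearMap.ker η, B (φ x) = -φ (B x))
    (hBinj : ∀ x ∈ LinearMap.ker η, B x = 0 → x = 0)
    (hBsurj : ∀ y ∈ LinearMap.ker η, ∃ x ∈ LinearMap.ker η, B x = y) :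
    Even n :=
  stmt11_general n hdim φ ξ η hφ2 hηξ hgφ B hBD hBskew hBφ hBinj
end

section
/- Let V be a finite-dimensional real vector space with complex structure J and basis {X₁, JX₁, ..., Xₙ, JXₙ}. Suppose A : V → V is linear, anti-commutes with J, and satisfies AXᵢ ∈ span{Xᵢ, JXᵢ} for each i, with A(Xᵢ + Xⱼ) ∈ span{Xᵢ + Xⱼ, J(Xᵢ + Xⱼ)} for all i, j, and A(JX₁ + X₂) ∈ span{JX₁ + X₂, J(JX₁ + X₂)} (when n ≥ 2). Then A = 0. -/
/-!
Regard `V` as a complex vector space via `J`; then `A` is antilinear. The first hypothesis says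
`A Xᵢ = λᵢ Xᵢ` for complex scalars `λᵢ`, and comparing coordinates in `A (Xᵢ + Xⱼ) = μ (Xᵢ + Xⱼ)`
forces all `λᵢ` to equal one `λ`. By antilinearity `A (i X₁ + X₂) = -i λ X₁ + λ X₂`, which is a
complex multiple of `i X₁ + X₂` only if `λ = -λ`. So `A` kills every `Xᵢ`, hence every `J Xᵢ`.
-/

open Submodule

section
variable {R M : Type*} [CommRing R] [AddCommGroup M] [Module R M]

theorem eq_and_eq_of_mem_span_pair_add {J : M →ₗ[R] M} {u w : M}
    (hli : LinearIndependent R ![u, J u, w, J w]) {p q r s : R}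
    (h : p • u + q • J u + (r • w + s • J w) ∈ span R {u + w, J (u + w)}) :
    p = r ∧ q = s := by
  obtain ⟨α, β, hαβ⟩ := mem_span_pair.mp h
  have hzero := Fintype.linearIndependent_iff.mp hli ![α - p, β - q, α - r, β - s] (by
    simp only [Fin.sum_univ_four, Fin.isValue, Matrix.cons_val]
    rw [map_add] at hαβ
    linear_combination (norm := module) hαβ)
  have hp : α = p := sub_eq_zero.mp (hzero 0)
  have hq : β = q := sub_eq_zero.mp (hzero 1)
  have hr : α = r := sub_eq_zero.mp (hzero 2)
  have hs : β = s := sub_eq_zero.mp (hzero 3)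
  exact ⟨hp.symm.trans hr, hq.symm.trans hs⟩

theorem LinearIndependent.apply_fst_of_sq_eq_neg {J : M →ₗ[R] M} (hJ : ∀ x, J (J x) = -x)
    {u w : M} (hli : LinearIndependent R ![u, J u, w, J w]) :
    LinearIndependent R ![J u, J (J u), w, J w] := by
  rw [Fintype.linearIndependent_iff] at hli ⊢
  intro g hg
  have hzero := hli ![-g 1, g 0, g 2, g 3] (by
    simp only [Fin.sum_univ_four, Fin.isValue, Matrix.cons_val, hJ] at hg ⊢
    linear_combination (norm := module) hg)
  intro i
  fin_cases i
  · simpa using hzero 1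
  · simpa using hzero 0
  · simpa using hzero 2
  · simpa using hzero 3

theorem Module.Basis.linearIndependent_inl_inr_pair {ι : Type*} (b : Module.Basis (ι ⊕ ι) R M)
    {i j : ι} (hij : i ≠ j) :
    LinearIndependent R ![b (.inl i), b (.inr i), b (.inl j), b (.inr j)] := by
  have hinj : Function.Injective ![Sum.inl i, Sum.inr i, Sum.inl j, Sum.inr j] := by
    intro x y
    fin_cases x <;> fin_cases y <;> simp [hij, hij.symm]
  convert b.linearIndependent.comp _ hinj using 1
  ext k
  fin_cases k <;> rfl

end

theorem stmt14 {V : Type*} [AddCommGroup V] [Module ℝ V]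
    (n : ℕ) (hn : 2 ≤ n) (J A : V →ₗ[ℝ] V)
    (hJ2 : ∀ X, J (J X) = -X)
    (hAJ : ∀ X, A (J X) = -J (A X))
    (X : Fin n → V)
    (b : Module.Basis (Fin n ⊕ Fin n) ℝ V)
    (hbl : ∀ i, b (Sum.inl i) = X i)
    (hbr : ∀ i, b (Sum.inr i) = J (X i))
    (h1 : ∀ i, A (X i) ∈ Submodule.span ℝ {X i, J (X i)})
    (h2 : ∀ i j, A (X i + X j) ∈ Submodule.span ℝ {X i + X j, J (X i + X j)})
    (h3 : A (J (X ⟨0, by omega⟩) + X ⟨1, by omega⟩) ∈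
      Submodule.span ℝ {J (X ⟨0, by omega⟩) + X ⟨1, by omega⟩,
        J (J (X ⟨0, by omega⟩) + X ⟨1, by omega⟩)}) :
    A = 0 := by
  have hli : ∀ i j, i ≠ j → LinearIndependent ℝ ![X i, J (X i), X j, J (X j)] := fun i j hij => by
    simpa only [hbl, hbr] using b.linearIndependent_inl_inr_pair hij
  choose a c hac using fun i => mem_span_pair.mp (h1 i)
  have hconst : ∀ i j, i ≠ j → a i = a j ∧ c i = c j := fun i j hij => by
    refine eq_and_eq_of_mem_span_pair_add (hli i j hij) ?_
    rw [hac, hac, ← map_add]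
    exact h2 i j
  set i₀ : Fin n := ⟨0, by omega⟩
  set i₁ : Fin n := ⟨1, by omega⟩
  have h01 : i₀ ≠ i₁ := by simp [i₀, i₁, Fin.ext_iff]
  have hneg : -a i₀ = a i₁ ∧ -c i₀ = c i₁ := by
    refine eq_and_eq_of_mem_span_pair_add ((hli i₀ i₁ h01).apply_fst_of_sq_eq_neg hJ2) ?_
    convert h3 using 1
    rw [map_add, hAJ, ← hac, ← hac, map_add, map_smul, map_smul, hJ2]
    module
  have h₀ : a i₀ = 0 ∧ c i₀ = 0 := by
    obtain ⟨ha, hc⟩ := hconst i₀ i₁ h01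
    constructor <;> linarith [hneg.1, hneg.2]
  have hAX : ∀ i, A (X i) = 0 := fun i => by
    obtain ⟨ha, hc⟩ : a i = 0 ∧ c i = 0 := by
      rcases eq_or_ne i i₀ with rfl | hi
      · exact h₀
      · exact ⟨(hconst i i₀ hi).1.trans h₀.1, (hconst i i₀ hi).2.trans h₀.2⟩
    simp [← hac, ha, hc]
  refine b.ext fun k => ?_
  rcases k with i | i
  · simp [hbl, hAX]
  · simp [hbr, hAJ, hAX]
end
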